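/- arXiv:0912.2126 — 7 statements merged into one kernel-verified Lean document; each statement's English description precedes it below -/
import Mathlib

section
/- Let D be a category with finite products and finite coproducts. Suppose there is a family of isomorphisms ψ_{X,Y,Z} : X×Y + X×Z ≅ X×(Y+Z), natural in X, Y, Z, and suppose that for every object X the product X×0 with the initial object is itself initial. Then D is distributive, i.e., the canonical map δ_{X,Y,Z} : X×Y + X×Z → X×(Y+Z) (induced by X×i and X×j) is invertible for all X, Y, Z. -/
/-!
Fix `X`. Naturality of `ψ` along `0 ⟶ Z` identifies the restriction of `ψ_{X,Y,Z}` to the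
summand `X × Y` with `X × i`, up to the automorphism of `X × Y ≅ X × Y + X × 0` induced by
`ψ_{X,Y,0}`; symmetrically on `X × Z`. Hence `ψ_{X,Y,Z} = (u + v) ≫ δ_{X,Y,Z}` for
isomorphisms `u`, `v`, so `δ_{X,Y,Z}` is invertible.
-/

open CategoryTheory CategoryTheory.Limits

namespace CategoryTheory.Limits

variable {C : Type*} [Category C]

lemma isIso_coprod_inl_of_isInitial {A B : C} [HasBinaryCoproduct A B] (hB : IsInitial B) :
    IsIso (coprod.inl : A ⟶ A ⨿ B) :=
  (BinaryCofan.isColimit_iff_isIso_inl hB (BinaryCofan.mk coprod.inl coprod.inr)).mp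
    ⟨coprodIsCoprod A B⟩

lemma isIso_coprod_inr_of_isInitial {A B : C} [HasBinaryCoproduct A B] (hA : IsInitial A) :
    IsIso (coprod.inr : B ⟶ A ⨿ B) :=
  (BinaryCofan.isColimit_iff_isIso_inr hA (BinaryCofan.mk coprod.inl coprod.inr)).mp
    ⟨coprodIsCoprod A B⟩

lemma isIso_coprod_desc_of_isIso {A B A' B' T : C} [HasBinaryCoproduct A B]
    [HasBinaryCoproduct A' B'] (φ : A ⨿ B ⟶ T) [IsIso φ] (u : A ⟶ A') (v : B ⟶ B')
    [IsIso u] [IsIso v] (f : A' ⟶ T) (g : B' ⟶ T) (hl : coprod.inl ≫ φ = u ≫ f)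
    (hr : coprod.inr ≫ φ = v ≫ g) : IsIso (coprod.desc f g) := by
  have : coprod.map u v ≫ coprod.desc f g = φ := by
    apply coprod.hom_ext
    · rw [coprod.inl_map_assoc, coprod.inl_desc, hl]
    · rw [coprod.inr_map_assoc, coprod.inr_desc, hr]
  have : IsIso (coprod.map u v ≫ coprod.desc f g) := by rw [this]; infer_instance
  exact IsIso.of_isIso_comp_left (coprod.map u v) _

section Distributivity

variable [HasFiniteProducts C] [HasFiniteCoproducts C] {X : C}
  (ψ : ∀ Y Z : C, (X ⨯ Y) ⨿ (X ⨯ Z) ≅ X ⨯ (Y ⨿ Z))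
  (nat : ∀ {Y Y' Z Z' : C} (g : Y ⟶ Y') (h : Z ⟶ Z'),
    coprod.map (prod.map (𝟙 X) g) (prod.map (𝟙 X) h) ≫ (ψ Y' Z').hom =
      (ψ Y Z).hom ≫ prod.map (𝟙 X) (coprod.map g h))
  {I : C} (hI : IsInitial I) (hXI : IsInitial (X ⨯ I))
include nat hI hXI

lemma exists_isIso_inl_comp_hom (Y Z : C) :
    ∃ u : X ⨯ Y ⟶ X ⨯ Y, IsIso u ∧
      coprod.inl ≫ (ψ Y Z).hom = u ≫ prod.map (𝟙 X) coprod.inl := by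
  have := isIso_coprod_inl_of_isInitial (A := Y) hI
  have := isIso_coprod_inl_of_isInitial (A := X ⨯ Y) hXI
  refine ⟨coprod.inl ≫ (ψ Y I).hom ≫ prod.map (𝟙 X) (inv coprod.inl), inferInstance, ?_⟩
  have hmap : coprod.map (𝟙 Y) (hI.to Z) = inv coprod.inl ≫ coprod.inl := by
    rw [IsIso.eq_inv_comp, coprod.inl_map, Category.id_comp]
  calc coprod.inl ≫ (ψ Y Z).hom
      = coprod.inl ≫ coprod.map (prod.map (𝟙 X) (𝟙 Y)) (prod.map (𝟙 X) (hI.to Z)) ≫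
          (ψ Y Z).hom := by simp
    _ = coprod.inl ≫ (ψ Y I).hom ≫ prod.map (𝟙 X) (coprod.map (𝟙 Y) (hI.to Z)) := by
          rw [nat]
    _ = _ := by simp only [hmap, prod.map_id_comp, Category.assoc]

lemma exists_isIso_inr_comp_hom (Y Z : C) :
    ∃ v : X ⨯ Z ⟶ X ⨯ Z, IsIso v ∧
      coprod.inr ≫ (ψ Y Z).hom = v ≫ prod.map (𝟙 X) coprod.inr := by
  have := isIso_coprod_inr_of_isInitial (B := Z) hI
  have := isIso_coprod_inr_of_isInitial (B := X ⨯ Z) hXI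
  refine ⟨coprod.inr ≫ (ψ I Z).hom ≫ prod.map (𝟙 X) (inv coprod.inr), inferInstance, ?_⟩
  have hmap : coprod.map (hI.to Y) (𝟙 Z) = inv coprod.inr ≫ coprod.inr := by
    rw [IsIso.eq_inv_comp, coprod.inr_map, Category.id_comp]
  calc coprod.inr ≫ (ψ Y Z).hom
      = coprod.inr ≫ coprod.map (prod.map (𝟙 X) (hI.to Y)) (prod.map (𝟙 X) (𝟙 Z)) ≫
          (ψ Y Z).hom := by simp
    _ = coprod.inr ≫ (ψ I Z).hom ≫ prod.map (𝟙 X) (coprod.map (hI.to Y) (𝟙 Z)) := by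
          rw [nat]
    _ = _ := by simp only [hmap, prod.map_id_comp, Category.assoc]

lemma isIso_coprod_desc_prod_map_inl_inr (Y Z : C) :
    IsIso (coprod.desc (prod.map (𝟙 X) coprod.inl) (prod.map (𝟙 X) coprod.inr) :
      (X ⨯ Y) ⨿ (X ⨯ Z) ⟶ X ⨯ (Y ⨿ Z)) := by
  obtain ⟨u, hu, hl⟩ := exists_isIso_inl_comp_hom ψ nat hI hXI Y Z
  obtain ⟨v, hv, hr⟩ := exists_isIso_inr_comp_hom ψ nat hI hXI Y Z
  exact isIso_coprod_desc_of_isIso (ψ Y Z).hom u v _ _ hl hr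

end Distributivity

end CategoryTheory.Limits

theorem stmt_0 {D : Type*} [Category D] [HasFiniteProducts D] [HasFiniteCoproducts D]
    (ψ : ∀ X Y Z : D, (X ⨯ Y) ⨿ (X ⨯ Z) ≅ X ⨯ (Y ⨿ Z))
    (nat : ∀ {X X' Y Y' Z Z' : D} (f : X ⟶ X') (g : Y ⟶ Y') (h : Z ⟶ Z'),
      coprod.map (prod.map f g) (prod.map f h) ≫ (ψ X' Y' Z').hom =
        (ψ X Y Z).hom ≫ prod.map f (coprod.map g h))
    (h0 : ∀ X : D, Nonempty (IsInitial (X ⨯ (⊥_ D)))) :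
    ∀ X Y Z : D, IsIso (coprod.desc (prod.map (𝟙 X) coprod.inl)
      (prod.map (𝟙 X) coprod.inr) : (X ⨯ Y) ⨿ (X ⨯ Z) ⟶ X ⨯ (Y ⨿ Z)) := fun X =>
  isIso_coprod_desc_prod_map_inl_inr (ψ X) (nat (𝟙 X)) initialIsInitial (h0 X).some
end

section
/- Let D be a category with finite products and finite coproducts, and suppose there is a natural family of isomorphisms θ_X : X + X ≅ X. If additionally D is pointed, then every object of D is a zero object. -/
open CategoryTheory CategoryTheory.Limits

theorem stmt_5 {D : Type*} [Category D] [HasFiniteProducts D] [HasFiniteCoproducts D]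
    (θ : ∀ X : D, X ⨿ X ≅ X)
    (nat : ∀ {X Y : D} (f : X ⟶ Y), coprod.map f f ≫ (θ Y).hom = (θ X).hom ≫ f)
    (pointed : IsIso (terminal.from (⊥_ D))) :
    ∀ X : D, IsZero X := by
  have hz : IsZero (⊥_ D) := by
    constructor
    · intro Y
      exact ⟨⟨⟨initial.to Y⟩, fun f => initial.hom_ext f _⟩⟩
    · intro Y
      refine ⟨⟨⟨terminal.from Y ≫ inv (terminal.from (⊥_ D))⟩, fun f => ?_⟩⟩
      have h1 : f ≫ terminal.from (⊥_ D) = terminal.from Y := terminal.hom_ext _ _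
      calc f = f ≫ terminal.from (⊥_ D) ≫ inv (terminal.from (⊥_ D)) := by simp
        _ = (f ≫ terminal.from (⊥_ D)) ≫ inv (terminal.from (⊥_ D)) := by
              rw [Category.assoc]
        _ = terminal.from Y ≫ inv (terminal.from (⊥_ D)) := by rw [h1]
  haveI : HasZeroObject D := ⟨⟨⊥_ D, hz⟩⟩
  letI : HasZeroMorphisms D := hz.hasZeroMorphisms
  intro X
  set a : X ⟶ X := (coprod.inl : X ⟶ X ⨿ X) ≫ (θ X).hom with ha
  set b : X ⟶ X := (coprod.inr : X ⟶ X ⨿ X) ≫ (θ X).hom with hb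
  -- naturality of a and b for endomorphisms of X
  have anat : ∀ h : X ⟶ X, a ≫ h = h ≫ a := by
    intro h
    rw [ha, Category.assoc, ← nat h, ← Category.assoc, coprod.inl_map, Category.assoc]
  have bnat : ∀ h : X ⟶ X, b ≫ h = h ≫ b := by
    intro h
    rw [hb, Category.assoc, ← nat h, ← Category.assoc, coprod.inr_map, Category.assoc]
  set m1 : X ⟶ X := (θ X).inv ≫ coprod.desc (𝟙 X) 0 with hm1
  set m0 : X ⟶ X := (θ X).inv ≫ coprod.desc 0 (𝟙 X) with hm0
  have am1 : a ≫ m1 = 𝟙 X := by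
    rw [ha, hm1, Category.assoc, Iso.hom_inv_id_assoc, coprod.inl_desc]
  have bm1 : b ≫ m1 = 0 := by
    rw [hb, hm1, Category.assoc, Iso.hom_inv_id_assoc, coprod.inr_desc]
  have am0 : a ≫ m0 = 0 := by
    rw [ha, hm0, Category.assoc, Iso.hom_inv_id_assoc, coprod.inl_desc]
  have bm0 : b ≫ m0 = 𝟙 X := by
    rw [hb, hm0, Category.assoc, Iso.hom_inv_id_assoc, coprod.inr_desc]
  have hb0 : b = 0 := by
    calc b = (a ≫ m1) ≫ b := by rw [am1, Category.id_comp]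
      _ = a ≫ (b ≫ m1) := by rw [Category.assoc, bnat]
      _ = 0 := by rw [bm1, comp_zero]
  have ha0 : a = 0 := by
    calc a = (b ≫ m0) ≫ a := by rw [bm0, Category.id_comp]
      _ = b ≫ (a ≫ m0) := by rw [Category.assoc, anat]
      _ = 0 := by rw [am0, comp_zero]
  have hid : 𝟙 X = 0 := by rw [← am1, ha0, zero_comp]
  rw [IsZero.iff_id_eq_zero]
  exact hid
end

section
/- Let D be a category with finite coproducts and a natural family of isomorphisms θ_X : X + X ≅ X. Then the codiagonal ∇ : X + X → X is an isomorphism for every object X. -/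
/-!
Naturality of `θ` at `θ_X` itself gives `θ_{X ⨿ X} = θ_X ⨿ θ_X`, and with this, naturality at
`inl` forces `inl ≫ θ_X = inr ≫ θ_X`. Hence the monomorphism `θ_X` factors through the codiagonal,
which is therefore mono; being split epi (with section `inl`), it is an isomorphism.
-/

open CategoryTheory CategoryTheory.Limits

namespace CategoryTheory.Limits

variable {C : Type*} [Category C]

theorem isIso_codiag_of_mono_of_inl_comp_eq_inr_comp {X Y : C} [HasBinaryCoproduct X X]
    (f : X ⨿ X ⟶ Y) [Mono f] (h : coprod.inl ≫ f = coprod.inr ≫ f) : IsIso (codiag X) := by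
  have fac : codiag X ≫ coprod.inl ≫ f = f := by
    ext
    · simp only [coprod.inl_desc_assoc, Category.id_comp]
    · simp only [coprod.inr_desc_assoc, Category.id_comp, h]
  have : Mono (codiag X) := mono_of_mono_fac fac
  have : IsSplitEpi (codiag X) := IsSplitEpi.mk' ⟨coprod.inl, coprod.inl_desc _ _⟩
  exact isIso_of_mono_of_isSplitEpi _

section

variable [HasBinaryCoproducts C] {θ : ∀ X : C, X ⨿ X ⟶ X} [∀ X, Mono (θ X)]

theorem app_coprod_self_eq_map_app
    (nat : ∀ {X Y : C} (f : X ⟶ Y), coprod.map f f ≫ θ Y = θ X ≫ f) (X : C) :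
    θ (X ⨿ X) = coprod.map (θ X) (θ X) :=
  ((cancel_mono (θ X)).mp (nat (θ X))).symm

theorem inl_comp_app_eq_inr_comp_app
    (nat : ∀ {X Y : C} (f : X ⟶ Y), coprod.map f f ≫ θ Y = θ X ≫ f) (X : C) :
    coprod.inl ≫ θ X = coprod.inr ≫ θ X := by
  have h := coprod.inr ≫= nat coprod.inl =≫ codiag X
  simpa only [app_coprod_self_eq_map_app nat, coprod.inr_map_assoc, coprod.inr_desc,
    Category.assoc, coprod.inl_desc, Category.comp_id] using h

end

end CategoryTheory.Limits

theorem stmt_7 {D : Type*} [Category D] [HasBinaryCoproducts D]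
    (θ : ∀ X : D, X ⨿ X ≅ X)
    (nat : ∀ {X Y : D} (f : X ⟶ Y), coprod.map f f ≫ (θ Y).hom = (θ X).hom ≫ f) :
    ∀ X : D, IsIso (coprod.desc (𝟙 X) (𝟙 X)) := fun X =>
  isIso_codiag_of_mono_of_inl_comp_eq_inr_comp (θ X).hom
    (inl_comp_app_eq_inr_comp_app (θ := fun X => (θ X).hom) nat X)
end

section
/- Let D be a category with finite products and finite coproducts, equipped with a natural family of isomorphisms ψ_{X,Y,Z} : X×Y + X×Z ≅ X×(Y+Z). Then D is distributive: the canonical map δ_{X,Y,Z} : X×Y + X×Z → X×(Y+Z) is an isomorphism for all X, Y, Z. -/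
/-!
Write `â_{X,Y}` (`inlEnd`) for the first component of `ψ_{X,Y,0}`, read as an endomorphism of
`X ⨯ Y` through `Y ⨿ 0 ≅ Y`, and `b̂_{X,Z}` (`inrEnd`) symmetrically. Naturality of `ψ` in `Y` and
`Z` gives `ψ_{X,Y,Z} = (â_{X,Y} ⨿ b̂_{X,Z}) ≫ δ_{X,Y,Z}`, so it suffices that `â` and `b̂` are
invertible, which they are as soon as every `X ⨯ 0` is initial.

Naturality in `X` and `Y` makes `â` a natural endomorphism of `(X, Y) ↦ X ⨯ Y`, hence of the form
`μ_X ⨯ ν_Y` for natural endomorphisms `μ`, `ν` of the identity functor. Then `â_{X,0} = μ_{X ⨯ 0}`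
commutes with every endomorphism of `S = X ⨯ 0`. Since `â_{X,0}` is the first component of the
isomorphism `S ⨿ S ≅ S` induced by `ψ_{X,0,0}`, the codiagonal precomposed with its inverse is a
two-sided inverse of `â_{X,0}`; so `inl : S ⟶ S ⨿ S` is invertible, `inl = inr`, and any two
morphisms out of `S` agree.
-/

open CategoryTheory CategoryTheory.Limits

namespace CategoryTheory.Limits

variable {D : Type*} [Category D]

lemma natTrans_id_app_prod (μ : 𝟭 D ⟶ 𝟭 D) (X Y : D) [HasBinaryProduct X Y] :
    μ.app (X ⨯ Y) = prod.map (μ.app X) (μ.app Y) := by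
  apply prod.hom_ext
  · simpa using (μ.naturality prod.fst).symm
  · simpa using (μ.naturality prod.snd).symm

lemma hom_ext_of_central_inl {S : D} [HasBinaryCoproduct S S] (φ : S ⨿ S ≅ S)
    (hφ : ∀ t : S ⟶ S, t ≫ coprod.inl ≫ φ.hom = (coprod.inl ≫ φ.hom) ≫ t)
    {W : D} (u v : S ⟶ W) : u = v := by
  let t := φ.inv ≫ coprod.desc (𝟙 S) (𝟙 S)
  have left_inv : (coprod.inl ≫ φ.hom) ≫ t = 𝟙 S := by
    simp only [t, Category.assoc, Iso.hom_inv_id_assoc]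
    exact coprod.inl_desc _ _
  have : IsIso (coprod.inl ≫ φ.hom) := ⟨t, left_inv, by rw [hφ, left_inv]⟩
  have : IsIso (coprod.inl : S ⟶ S ⨿ S) := by
    simpa using (inferInstance : IsIso ((coprod.inl ≫ φ.hom) ≫ φ.inv))
  have hdesc : coprod.desc (𝟙 S) (𝟙 S) = inv (coprod.inl : S ⟶ S ⨿ S) :=
    IsIso.eq_inv_of_hom_inv_id (coprod.inl_desc _ _)
  have inr_eq_inl : (coprod.inr : S ⟶ S ⨿ S) = coprod.inl := by
    simpa [hdesc] using congrArg (· ≫ (coprod.inl : S ⟶ S ⨿ S)) (coprod.inr_desc (𝟙 S) (𝟙 S))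
  rw [← coprod.inr_desc u v, inr_eq_inl, coprod.inl_desc]

section ProdEnd

variable [HasFiniteProducts D] (α : ∀ X Y : D, X ⨯ Y ⟶ X ⨯ Y)
  (hα : ∀ {X X' Y Y' : D} (f : X ⟶ X') (g : Y ⟶ Y'),
    prod.map f g ≫ α X' Y' = α X Y ≫ prod.map f g)

@[simps]
noncomputable def prodEndLeft : 𝟭 D ⟶ 𝟭 D where
  app X := (prod.rightUnitor X).inv ≫ α X (⊤_ D) ≫ prod.fst
  naturality X X' f := by
    simp only [Functor.id_obj, Functor.id_map]
    rw [← prod_rightUnitor_inv_naturality_assoc, reassoc_of% hα f (𝟙 _)]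
    simp

@[simps]
noncomputable def prodEndRight : 𝟭 D ⟶ 𝟭 D where
  app Y := (prod.leftUnitor Y).inv ≫ α (⊤_ D) Y ≫ prod.snd
  naturality Y Y' g := by
    simp only [Functor.id_obj, Functor.id_map]
    rw [← prod.leftUnitor_inv_naturality_assoc, reassoc_of% hα (𝟙 _) g]
    simp

lemma prodEnd_comp_fst (X Y : D) : α X Y ≫ prod.fst = prod.fst ≫ (prodEndLeft α hα).app X := by
  have : prod.map (𝟙 X) (terminal.from Y) = prod.fst ≫ (prod.rightUnitor X).inv := by
    apply prod.hom_ext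
    · rw [prod.map_fst, Category.assoc, prod.rightUnitor_inv, prod.lift_fst]
    · exact terminal.hom_ext _ _
  rw [← Category.comp_id (α X Y ≫ prod.fst), Category.assoc,
    ← prod.map_fst (𝟙 X) (terminal.from Y),
    ← reassoc_of% (hα (𝟙 X) (terminal.from Y)), this, prodEndLeft_app, Category.assoc]
  rfl

lemma prodEnd_comp_snd (X Y : D) : α X Y ≫ prod.snd = prod.snd ≫ (prodEndRight α hα).app Y := by
  have : prod.map (terminal.from X) (𝟙 Y) = prod.snd ≫ (prod.leftUnitor Y).inv := by
    apply prod.hom_ext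
    · exact terminal.hom_ext _ _
    · rw [prod.map_snd, Category.assoc, prod.leftUnitor_inv, prod.lift_snd]
  rw [← Category.comp_id (α X Y ≫ prod.snd), Category.assoc,
    ← prod.map_snd (terminal.from X) (𝟙 Y),
    ← reassoc_of% (hα (terminal.from X) (𝟙 Y)), this, prodEndRight_app, Category.assoc]
  rfl

lemma prodEnd_eq_prod_map (X Y : D) :
    α X Y = prod.map ((prodEndLeft α hα).app X) ((prodEndRight α hα).app Y) := by
  apply prod.hom_ext
  · exact (prodEnd_comp_fst α hα X Y).trans (prod.map_fst _ _).symm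
  · exact (prodEnd_comp_snd α hα X Y).trans (prod.map_snd _ _).symm

lemma prodEndLeft_app_prod_initial [HasInitial D] (X : D) :
    (prodEndLeft α hα).app (X ⨯ ⊥_ D) = α X (⊥_ D) := by
  rw [natTrans_id_app_prod, prodEnd_eq_prod_map α hα]
  congr 1
  exact initial.hom_ext _ _

include hα in
lemma prodEnd_prod_initial_comm [HasInitial D] {X : D} (t : X ⨯ ⊥_ D ⟶ X ⨯ ⊥_ D) :
    t ≫ α X (⊥_ D) = α X (⊥_ D) ≫ t := by
  rw [← prodEndLeft_app_prod_initial α hα]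
  exact (prodEndLeft α hα).naturality t

end ProdEnd

namespace NatDistrib

variable [HasFiniteProducts D] [HasFiniteCoproducts D]
  (ψ : ∀ X Y Z : D, (X ⨯ Y) ⨿ (X ⨯ Z) ≅ X ⨯ (Y ⨿ Z))

noncomputable def inlEnd (X Y : D) : X ⨯ Y ⟶ X ⨯ Y :=
  coprod.inl ≫ (ψ X Y (⊥_ D)).hom ≫ prod.map (𝟙 X) (coprod.rightUnitor Y).hom

noncomputable def inrEnd (X Z : D) : X ⨯ Z ⟶ X ⨯ Z :=
  coprod.inr ≫ (ψ X (⊥_ D) Z).hom ≫ prod.map (𝟙 X) (coprod.leftUnitor Z).hom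

variable (nat : ∀ {X X' Y Y' Z Z' : D} (f : X ⟶ X') (g : Y ⟶ Y') (h : Z ⟶ Z'),
  coprod.map (prod.map f g) (prod.map f h) ≫ (ψ X' Y' Z').hom =
    (ψ X Y Z).hom ≫ prod.map f (coprod.map g h))
include nat

lemma inlEnd_naturality {X X' Y Y' : D} (f : X ⟶ X') (g : Y ⟶ Y') :
    prod.map f g ≫ inlEnd ψ X' Y' = inlEnd ψ X Y ≫ prod.map f g := by
  rw [inlEnd, inlEnd, ← coprod.inl_map_assoc (prod.map f g) (prod.map f (𝟙 (⊥_ D))),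
    reassoc_of% nat, prod.map_map, coprod.rightUnitor_naturality]
  simp

lemma inl_comp_hom (X Y Z : D) :
    coprod.inl ≫ (ψ X Y Z).hom = inlEnd ψ X Y ≫ prod.map (𝟙 X) coprod.inl := by
  have h := coprod.inl ≫= nat (𝟙 X) (𝟙 Y) (initial.to Z)
  have : coprod.map (𝟙 Y) (initial.to Z) = (coprod.rightUnitor Y).hom ≫ coprod.inl := by
    apply coprod.hom_ext
    · rw [coprod.inl_map, coprod.rightUnitor_hom, coprod.inl_desc_assoc]
    · exact initial.hom_ext _ _
  rw [coprod.inl_map_assoc, prod.map_id_id, Category.id_comp, this] at h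
  simp [h, inlEnd]

lemma inr_comp_hom (X Y Z : D) :
    coprod.inr ≫ (ψ X Y Z).hom = inrEnd ψ X Z ≫ prod.map (𝟙 X) coprod.inr := by
  have h := coprod.inr ≫= nat (𝟙 X) (initial.to Y) (𝟙 Z)
  have : coprod.map (initial.to Y) (𝟙 Z) = (coprod.leftUnitor Z).hom ≫ coprod.inr := by
    apply coprod.hom_ext
    · exact initial.hom_ext _ _
    · rw [coprod.inr_map, coprod.leftUnitor_hom, coprod.inr_desc_assoc]
  rw [coprod.inr_map_assoc, prod.map_id_id, Category.id_comp, this] at h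
  simp [h, inrEnd]

lemma prod_initial_hom_ext {X W : D} (u v : X ⨯ ⊥_ D ⟶ W) : u = v :=
  hom_ext_of_central_inl (ψ X (⊥_ D) (⊥_ D) ≪≫ prod.mapIso (Iso.refl X) (coprod.rightUnitor _))
    (fun t => by simpa [inlEnd] using prodEnd_prod_initial_comm _ (inlEnd_naturality ψ nat) t) u v

noncomputable def isInitialProdInitial (X : D) : IsInitial (X ⨯ ⊥_ D) :=
  IsInitial.ofUniqueHom (fun W => prod.snd ≫ initial.to W)
    (fun _ _ => prod_initial_hom_ext ψ nat _ _)

lemma isIso_inlEnd (X Y : D) : IsIso (inlEnd ψ X Y) := by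
  have : IsIso (coprod.inl : X ⨯ Y ⟶ (X ⨯ Y) ⨿ (X ⨯ ⊥_ D)) :=
    (BinaryCofan.isColimit_iff_isIso_inl (isInitialProdInitial ψ nat X)
      (BinaryCofan.mk coprod.inl coprod.inr)).mp ⟨coprodIsCoprod _ _⟩
  rw [inlEnd]
  infer_instance

lemma isIso_inrEnd (X Z : D) : IsIso (inrEnd ψ X Z) := by
  have : IsIso (coprod.inr : X ⨯ Z ⟶ (X ⨯ ⊥_ D) ⨿ (X ⨯ Z)) :=
    (BinaryCofan.isColimit_iff_isIso_inr (isInitialProdInitial ψ nat X)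
      (BinaryCofan.mk coprod.inl coprod.inr)).mp ⟨coprodIsCoprod _ _⟩
  rw [inrEnd]
  infer_instance

lemma hom_eq_map_comp_desc (X Y Z : D) :
    (ψ X Y Z).hom = coprod.map (inlEnd ψ X Y) (inrEnd ψ X Z) ≫
      coprod.desc (prod.map (𝟙 X) coprod.inl) (prod.map (𝟙 X) coprod.inr) := by
  apply coprod.hom_ext
  · rw [inl_comp_hom ψ nat, coprod.inl_map_assoc, coprod.inl_desc]
  · rw [inr_comp_hom ψ nat, coprod.inr_map_assoc, coprod.inr_desc]

end NatDistrib

end CategoryTheory.Limits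

theorem stmt_8 {D : Type*} [Category D] [HasFiniteProducts D] [HasFiniteCoproducts D]
    (ψ : ∀ X Y Z : D, (X ⨯ Y) ⨿ (X ⨯ Z) ≅ X ⨯ (Y ⨿ Z))
    (nat : ∀ {X X' Y Y' Z Z' : D} (f : X ⟶ X') (g : Y ⟶ Y') (h : Z ⟶ Z'),
      coprod.map (prod.map f g) (prod.map f h) ≫ (ψ X' Y' Z').hom =
        (ψ X Y Z).hom ≫ prod.map f (coprod.map g h)) :
    ∀ X Y Z : D, IsIso (coprod.desc (prod.map (𝟙 X) coprod.inl)
      (prod.map (𝟙 X) coprod.inr) : (X ⨯ Y) ⨿ (X ⨯ Z) ⟶ X ⨯ (Y ⨿ Z)) := by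
  intro X Y Z
  open NatDistrib in
  have := isIso_inlEnd ψ nat X Y
  have := isIso_inrEnd ψ nat X Z
  have : IsIso (coprod.map (inlEnd ψ X Y) (inrEnd ψ X Z) ≫
      coprod.desc (prod.map (𝟙 X) coprod.inl) (prod.map (𝟙 X) coprod.inr)) := by
    rw [← hom_eq_map_comp_desc ψ nat]
    infer_instance
  exact IsIso.of_isIso_comp_left (coprod.map (inlEnd ψ X Y) (inrEnd ψ X Z)) _
end

section
/- Let A be a category with finite products and finite coproducts and a natural family of isomorphisms ψ_{Y,Z} : Y + Z ≅ Y × Z. Then the unique morphism 0 → 1 from the initial to the terminal object is an isomorphism, i.e., A is pointed. -/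
open CategoryTheory CategoryTheory.Limits

theorem stmt_12 {A : Type*} [Category A] [HasFiniteProducts A] [HasFiniteCoproducts A]
    (ψ : ∀ Y Z : A, Y ⨿ Z ≅ Y ⨯ Z)
    (nat : ∀ {Y Y' Z Z' : A} (g : Y ⟶ Y') (h : Z ⟶ Z'),
      coprod.map g h ≫ (ψ Y' Z').hom = (ψ Y Z).hom ≫ prod.map g h) :
    IsIso (terminal.from (⊥_ A)) := by
  refine ⟨coprod.inr ≫ (ψ (⊥_ A) (⊤_ A)).hom ≫ prod.fst, ?_, ?_⟩
  · exact initial.hom_ext _ _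
  · exact terminal.hom_ext _ _
end

section
/- Let A and B be braided monoidal categories and F : A → B a normal monoidal functor (its unit constraint φ₀ : I → FI is invertible). Suppose there is a monoidal natural isomorphism ψ between the composite ⊗ ∘ (F × F) and F ∘ ⊗ as monoidal functors A × A → B. Then the binary structure maps φ_{Y,Z} : FY ⊗ FZ → F(Y⊗Z) are all invertible, so F is strong monoidal. -/
/-!
Normality and the unit axioms make `μ F X 𝟙` and `μ F 𝟙 X` invertible. Monoidality of `ψ` at the
pair `((Y, 𝟙), (𝟙, Z))` exhibits `μ F (Y ⊗ 𝟙) (𝟙 ⊗ Z)`, followed by `F` of the (invertible)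
middle-four interchange, as a conjugate of `μ F Y 𝟙 ⊗ μ F 𝟙 Z` by isomorphisms. Naturality of `μ`
along the unitors then transports invertibility to `μ F Y Z`.
-/

open CategoryTheory CategoryTheory.MonoidalCategory CategoryTheory.Functor

namespace CategoryTheory.Functor.LaxMonoidal

section

variable {C D : Type*} [Category C] [Category D] [MonoidalCategory C] [MonoidalCategory D]
  (F : C ⥤ D) [F.LaxMonoidal]

lemma isIso_μ_of_iso {X X' Y Y' : C} (f : X ≅ X') (g : Y ≅ Y') [IsIso (μ F X' Y')] :
    IsIso (μ F X Y) := by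
  rw [show μ F X Y = (F.map f.hom ⊗ₘ F.map g.hom) ≫ μ F X' Y' ≫ F.map (f.inv ⊗ₘ g.inv) by
    rw [μ_natural_assoc, ← F.map_comp, tensorHom_comp_tensorHom]; simp]
  infer_instance

lemma isIso_μ_tensorUnit_right [IsIso (ε F)] (X : C) : IsIso (μ F X (𝟙_ C)) := by
  rw [show μ F X (𝟙_ C) = CategoryTheory.inv (F.obj X ◁ ε F) ≫ (ρ_ _).hom ≫ F.map (ρ_ X).inv by
    simp]
  infer_instance

lemma isIso_μ_tensorUnit_left [IsIso (ε F)] (X : C) : IsIso (μ F (𝟙_ C) X) := by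
  rw [show μ F (𝟙_ C) X = CategoryTheory.inv (ε F ▷ F.obj X) ≫ (λ_ _).hom ≫ F.map (λ_ X).inv by
    simp]
  infer_instance

end

variable {A B : Type*} [Category A] [Category B] [MonoidalCategory A] [MonoidalCategory B]
  [BraidedCategory A] [BraidedCategory B] (F : A ⥤ B) [F.LaxMonoidal]

lemma isIso_μ_tensor_of_isIso_μ {ψ : F.prod F ⋙ tensor B ≅ tensor A ⋙ F}
    (mon : NatTrans.IsMonoidal ψ.hom) (X₁ X₂ Y₁ Y₂ : A) [IsIso (μ F X₁ Y₁)] [IsIso (μ F X₂ Y₂)] :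
    IsIso (μ F (X₁ ⊗ X₂) (Y₁ ⊗ Y₂)) := by
  have key := mon.tensor (X₁, X₂) (Y₁, Y₂)
  simp only [comp_μ, tensor_obj] at key
  have : IsIso (μ (F.prod F) (X₁, X₂) (Y₁, Y₂)) :=
    (isIso_prod_iff ..).mpr
      ⟨inferInstanceAs (IsIso (μ F X₁ Y₁)), inferInstanceAs (IsIso (μ F X₂ Y₂))⟩
  have : IsIso ((ψ.hom.app (X₁, X₂) ⊗ₘ ψ.hom.app (Y₁, Y₂)) ≫
      μ F (X₁ ⊗ X₂) (Y₁ ⊗ Y₂) ≫ F.map (μ (tensor A) (X₁, X₂) (Y₁, Y₂))) := by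
    rw [← key]
    infer_instance
  have := IsIso.of_isIso_comp_left (ψ.hom.app (X₁, X₂) ⊗ₘ ψ.hom.app (Y₁, Y₂))
    (μ F (X₁ ⊗ X₂) (Y₁ ⊗ Y₂) ≫ F.map (μ (tensor A) (X₁, X₂) (Y₁, Y₂)))
  exact IsIso.of_isIso_comp_right _ (F.map (μ (tensor A) (X₁, X₂) (Y₁, Y₂)))

end CategoryTheory.Functor.LaxMonoidal

theorem stmt_15 {A B : Type*} [Category A] [Category B]
    [MonoidalCategory A] [MonoidalCategory B] [BraidedCategory A] [BraidedCategory B]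
    (F : A ⥤ B) [F.LaxMonoidal] (normal : IsIso (LaxMonoidal.ε F))
    (ψ : (F.prod F) ⋙ tensor B ≅ tensor A ⋙ F)
    (mon : NatTrans.IsMonoidal ψ.hom) :
    ∀ Y Z : A, IsIso (LaxMonoidal.μ F Y Z) := by
  intro Y Z
  have := LaxMonoidal.isIso_μ_tensorUnit_right F Y
  have := LaxMonoidal.isIso_μ_tensorUnit_left F Z
  have := LaxMonoidal.isIso_μ_tensor_of_isIso_μ F mon Y (𝟙_ A) (𝟙_ A) Z
  exact LaxMonoidal.isIso_μ_of_iso F (ρ_ Y).symm (λ_ Z).symm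
end

section
/- Let A and B be categories with finite coproducts and F : A → B a functor preserving the initial object. If there is a natural family of isomorphisms ψ_{X,Y} : FX + FY ≅ F(X+Y), then F preserves finite coproducts, i.e., the canonical map FX + FY → F(X+Y) induced by F(i) and F(j) is an isomorphism for all X, Y. -/
/-!
Naturality of `ψ` along `𝟙 X ⨿ (⊥ ⟶ Y)`, together with `X ≅ X ⨿ ⊥` and `F X ≅ F X ⨿ F ⊥`,
shows that `F.map inl : F X ⟶ F (X ⨿ Y)` is, up to an automorphism of `F X`,
the first injection of `F X ⨿ F Y` followed by `ψ`; symmetrically for `inr`. Hence the canonical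
comparison map is `coprod.map eX eY ≫ ψ`, a composite of isomorphisms.
-/

open CategoryTheory CategoryTheory.Limits

namespace CategoryTheory.Limits

variable {C : Type*} [Category C]

theorem isIso_coprod_inl_of_isInitial_s16 {X Y : C} [HasBinaryCoproduct X Y] (hY : IsInitial Y) :
    IsIso (coprod.inl : X ⟶ X ⨿ Y) :=
  (BinaryCofan.isColimit_iff_isIso_inl hY (BinaryCofan.mk coprod.inl coprod.inr)).mp
    ⟨coprodIsCoprod X Y⟩

theorem isIso_coprod_inr_of_isInitial_s16 {X Y : C} [HasBinaryCoproduct X Y] (hX : IsInitial X) :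
    IsIso (coprod.inr : Y ⟶ X ⨿ Y) :=
  (BinaryCofan.isColimit_iff_isIso_inr hX (BinaryCofan.mk coprod.inl coprod.inr)).mp
    ⟨coprodIsCoprod X Y⟩

theorem isIso_coprod_desc_of_eq_comp {P Q Z : C} [HasBinaryCoproduct P Q] (φ : P ⨿ Q ≅ Z)
    (e : P ≅ P) (e' : Q ≅ Q) {f : P ⟶ Z} {g : Q ⟶ Z}
    (hf : f = e.hom ≫ coprod.inl ≫ φ.hom) (hg : g = e'.hom ≫ coprod.inr ≫ φ.hom) :
    IsIso (coprod.desc f g) := by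
  have : coprod.desc f g = coprod.map e.hom e'.hom ≫ φ.hom := by
    subst hf hg
    ext
    · rw [coprod.inl_desc, coprod.inl_map_assoc]
    · rw [coprod.inr_desc, coprod.inr_map_assoc]
  rw [this]
  infer_instance

end CategoryTheory.Limits

section

variable {A B : Type*} [Category A] [Category B] [HasBinaryCoproducts A] [HasInitial A]
  [HasBinaryCoproducts B] (F : A ⥤ B) (hF : IsInitial (F.obj (⊥_ A)))
  (ψ : ∀ X Y : A, F.obj X ⨿ F.obj Y ≅ F.obj (X ⨿ Y))
  (nat : ∀ {X X' Y Y' : A} (f : X ⟶ X') (g : Y ⟶ Y'),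
    coprod.map (F.map f) (F.map g) ≫ (ψ X' Y').hom = (ψ X Y).hom ≫ F.map (coprod.map f g))
include hF nat

theorem exists_map_inl_eq_comp_inl_comp (X Y : A) :
    ∃ e : F.obj X ≅ F.obj X,
      F.map (coprod.inl : X ⟶ X ⨿ Y) = e.hom ≫ coprod.inl ≫ (ψ X Y).hom := by
  have := isIso_coprod_inl_of_isInitial_s16 (X := F.obj X) hF
  have := isIso_coprod_inl_of_isInitial_s16 (X := X) initialIsInitial
  let u : F.obj X ⟶ F.obj (X ⨿ ⊥_ A) := coprod.inl ≫ (ψ X (⊥_ A)).hom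
  have hu : coprod.inl ≫ (ψ X Y).hom = u ≫ F.map (coprod.map (𝟙 X) (initial.to Y)) := by
    simpa [u] using coprod.inl ≫= nat (𝟙 X) (initial.to Y)
  refine ⟨asIso (F.map coprod.inl ≫ inv u), ?_⟩
  rw [asIso_hom, hu, Category.assoc, IsIso.inv_hom_id_assoc, ← F.map_comp, coprod.inl_map,
    Category.id_comp]

theorem exists_map_inr_eq_comp_inr_comp (X Y : A) :
    ∃ e : F.obj Y ≅ F.obj Y,
      F.map (coprod.inr : Y ⟶ X ⨿ Y) = e.hom ≫ coprod.inr ≫ (ψ X Y).hom := by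
  have := isIso_coprod_inr_of_isInitial_s16 (Y := F.obj Y) hF
  have := isIso_coprod_inr_of_isInitial_s16 (Y := Y) initialIsInitial
  let u : F.obj Y ⟶ F.obj ((⊥_ A) ⨿ Y) := coprod.inr ≫ (ψ (⊥_ A) Y).hom
  have hu : coprod.inr ≫ (ψ X Y).hom = u ≫ F.map (coprod.map (initial.to X) (𝟙 Y)) := by
    simpa [u] using coprod.inr ≫= nat (initial.to X) (𝟙 Y)
  refine ⟨asIso (F.map coprod.inr ≫ inv u), ?_⟩
  rw [asIso_hom, hu, Category.assoc, IsIso.inv_hom_id_assoc, ← F.map_comp, coprod.inr_map,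
    Category.id_comp]

end

theorem stmt_16 {A B : Type*} [Category A] [Category B]
    [HasFiniteCoproducts A] [HasFiniteCoproducts B]
    (F : A ⥤ B) (h0 : Nonempty (IsInitial (F.obj (⊥_ A))))
    (ψ : ∀ X Y : A, F.obj X ⨿ F.obj Y ≅ F.obj (X ⨿ Y))
    (nat : ∀ {X X' Y Y' : A} (f : X ⟶ X') (g : Y ⟶ Y'),
      coprod.map (F.map f) (F.map g) ≫ (ψ X' Y').hom =
        (ψ X Y).hom ≫ F.map (coprod.map f g)) :
    ∀ X Y : A, IsIso (coprod.desc (F.map coprod.inl) (F.map coprod.inr) :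
      F.obj X ⨿ F.obj Y ⟶ F.obj (X ⨿ Y)) := by
  obtain ⟨hF⟩ := h0
  intro X Y
  obtain ⟨eX, hX⟩ := exists_map_inl_eq_comp_inl_comp F hF ψ nat X Y
  obtain ⟨eY, hY⟩ := exists_map_inr_eq_comp_inr_comp F hF ψ nat X Y
  exact isIso_coprod_desc_of_eq_comp (ψ X Y) eX eY hX hY
end
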